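/- arXiv:math/9802026 — 3 statements merged into one kernel-verified Lean document; each statement's English description precedes it below -/
import Mathlib

section
/- For integers q ≥ 0 and m ≥ 0, the total number of q-satisfying sequences of length m equals the sum over k = 0, 1, …, ⌊m/(q+1)⌋ of ((m−(q+1)k+1)/(m−k+1)) · binom(m, k). -/
/-!
Let `a(m, k)` be the number of `q`-satisfying sequences of length `m` with `k` ones. Splitting off
the last letter gives the Pascal recurrence `a(m+1, k+1) = a(m, k+1) + a(m, k)` whenever
`(q+1)(k+1) ≤ m+1`, while `a(m, 0) = 1` and `a(m, k) = 0` once `(q+1)k > m`. Induction on `m` then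
gives the ballot formula `a(m, k+1) = C(m, k+1) - q C(m, k)` for `(q+1)(k+1) ≤ m+1`; on the
boundary `(q+1)(k+1) = m+1` both sides vanish, which closes the induction. The ballot formula is
`(m-(q+1)(k+1)+1)/(m-k) · C(m, k+1)`, and summing over the number of ones gives the theorem.
-/

/-- A sequence of 0's (`false`) and 1's (`true`) is `q`-satisfying if in every
prefix the number of 0's is at least `q` times the number of 1's. -/
def QSatisfying (q : ℕ) (l : List Bool) : Prop :=
  ∀ m : ℕ, m ≤ l.length →
    q * (l.take m).count true ≤ (l.take m).count false

open Finset

namespace QSatisfying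

variable {q : ℕ} {l : List Bool}

theorem replicate_false (q m : ℕ) : QSatisfying q (List.replicate m false) := by
  intro n _
  simp [List.take_replicate, List.count_replicate]

theorem mul_count_true_le (h : QSatisfying q l) : q * l.count true ≤ l.count false := by
  simpa using h l.length le_rfl

theorem succ_mul_count_true_le_length (h : QSatisfying q l) :
    (q + 1) * l.count true ≤ l.length := by
  have := h.mul_count_true_le
  have := List.count_true_add_count_false l
  grind

theorem append_singleton_iff {b : Bool} :
    QSatisfying q (l ++ [b]) ↔
      QSatisfying q l ∧ q * (l ++ [b]).count true ≤ (l ++ [b]).count false := by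
  refine ⟨fun h => ⟨fun n hn => ?_, h.mul_count_true_le⟩, fun ⟨h, hlast⟩ n hn => ?_⟩
  · simpa [List.take_append_of_le_length hn] using h n (by simp; omega)
  · rcases Nat.lt_or_ge n (l.length + 1) with hn' | hn'
    · simpa [List.take_append_of_le_length (Nat.le_of_lt_succ hn')] using h n (by omega)
    · simpa [List.take_of_length_le (l := l ++ [b]) (by simpa using hn')] using hlast

theorem append_false_iff : QSatisfying q (l ++ [false]) ↔ QSatisfying q l := by
  rw [append_singleton_iff]
  exact ⟨And.left, fun h => ⟨h, by simpa using h.mul_count_true_le.trans (Nat.le_succ _)⟩⟩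

theorem append_true_iff :
    QSatisfying q (l ++ [true]) ↔
      QSatisfying q l ∧ (q + 1) * (l.count true + 1) ≤ l.length + 1 := by
  rw [append_singleton_iff]
  have := List.count_true_add_count_false l
  simp only [List.count_append, List.count_singleton_self, List.count_singleton,
    Bool.true_eq_false, beq_iff_eq, if_false]
  constructor <;> rintro ⟨h, hlast⟩ <;> exact ⟨h, by grind⟩

end QSatisfying

theorem Nat.choose_succ_eq_mul_choose_of_succ_mul_eq {q m k : ℕ}
    (h : (q + 1) * (k + 1) = m + 1) :
    m.choose (k + 1) = q * m.choose k := by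
  refine Nat.eq_of_mul_eq_mul_right k.add_one_pos ?_
  rw [Nat.choose_succ_right_eq, show m - k = q * (k + 1) by grind]
  ring

theorem finite_setOf_qSatisfying_length_eq (q m : ℕ) :
    {l : List Bool | l.length = m ∧ QSatisfying q l}.Finite :=
  (List.finite_length_eq Bool m).subset fun _ h => h.1

noncomputable def qSatLists (q m : ℕ) : Finset (List Bool) :=
  (finite_setOf_qSatisfying_length_eq q m).toFinset

noncomputable def qSatListsWithOnes (q m k : ℕ) : Finset (List Bool) :=
  {l ∈ qSatLists q m | l.count true = k}

section Counting

variable {q m k : ℕ} {l : List Bool}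

theorem mem_qSatListsWithOnes :
    l ∈ qSatListsWithOnes q m k ↔ l.length = m ∧ QSatisfying q l ∧ l.count true = k := by
  simp [qSatListsWithOnes, qSatLists, and_assoc]

theorem qSatListsWithOnes_zero : qSatListsWithOnes q m 0 = {List.replicate m false} := by
  ext l
  rw [mem_qSatListsWithOnes, mem_singleton]
  constructor
  · rintro ⟨hlen, -, hk⟩
    rw [List.eq_replicate_iff]
    exact ⟨hlen, fun b hb => by cases b <;> simp_all [List.count_eq_zero]⟩
  · rintro rfl
    exact ⟨by simp, QSatisfying.replicate_false q m, by simp [List.count_replicate]⟩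

theorem qSatListsWithOnes_eq_empty (h : m < (q + 1) * k) : qSatListsWithOnes q m k = ∅ := by
  refine eq_empty_of_forall_notMem fun l hl => ?_
  obtain ⟨rfl, hq, rfl⟩ := mem_qSatListsWithOnes.1 hl
  exact absurd hq.succ_mul_count_true_le_length (not_le.2 h)

theorem qSatListsWithOnes_succ_succ (h : (q + 1) * (k + 1) ≤ m + 1) :
    qSatListsWithOnes q (m + 1) (k + 1) =
      (qSatListsWithOnes q m (k + 1)).image (· ++ [false]) ∪
        (qSatListsWithOnes q m k).image (· ++ [true]) := by
  ext l
  simp only [mem_union, mem_image, mem_qSatListsWithOnes]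
  rcases l.eq_nil_or_concat' with rfl | ⟨l, b, rfl⟩
  · simp
  cases b
  · simp [QSatisfying.append_false_iff]
  · simp +contextual [QSatisfying.append_true_iff, h]

theorem card_qSatListsWithOnes_succ_succ (h : (q + 1) * (k + 1) ≤ m + 1) :
    #(qSatListsWithOnes q (m + 1) (k + 1)) =
      #(qSatListsWithOnes q m (k + 1)) + #(qSatListsWithOnes q m k) := by
  rw [qSatListsWithOnes_succ_succ h, card_union_of_disjoint,
    card_image_of_injective _ (List.append_left_injective _),
    card_image_of_injective _ (List.append_left_injective _)]
  simp [disjoint_left]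

theorem card_qSatListsWithOnes_add_mul_choose_of_eq (h : (q + 1) * (k + 1) = m + 1) :
    #(qSatListsWithOnes q m (k + 1)) + q * m.choose k = m.choose (k + 1) := by
  rw [qSatListsWithOnes_eq_empty (by omega), card_empty, zero_add,
    Nat.choose_succ_eq_mul_choose_of_succ_mul_eq h]

theorem card_qSatListsWithOnes_add_mul_choose (h : (q + 1) * (k + 1) ≤ m + 1) :
    #(qSatListsWithOnes q m (k + 1)) + q * m.choose k = m.choose (k + 1) := by
  induction m generalizing k with
  | zero =>
    exact card_qSatListsWithOnes_add_mul_choose_of_eq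
      (h.antisymm (Nat.mul_pos q.succ_pos k.succ_pos))
  | succ m ih =>
    rcases h.eq_or_lt with h | h
    · exact card_qSatListsWithOnes_add_mul_choose_of_eq h
    have hk := ih (Nat.le_of_lt_succ h)
    rw [card_qSatListsWithOnes_succ_succ (Nat.le_of_lt_succ h), Nat.choose_succ_succ']
    cases k with
    | zero =>
      simp only [qSatListsWithOnes_zero, card_singleton, Nat.choose_zero_right] at hk ⊢
      omega
    | succ k =>
      have hk' := ih (k := k)
        ((Nat.mul_le_mul_left _ (k + 1).le_succ).trans (Nat.le_of_lt_succ h))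
      rw [Nat.choose_succ_succ', mul_add]
      omega

theorem card_qSatListsWithOnes_eq (h : (q + 1) * k ≤ m) :
    (#(qSatListsWithOnes q m k) : ℚ) =
      ((m : ℚ) - (q + 1) * k + 1) / ((m : ℚ) - k + 1) * m.choose k := by
  cases k with
  | zero =>
    rw [qSatListsWithOnes_zero]
    simp [div_self (m.cast_add_one_ne_zero (R := ℚ))]
  | succ k =>
    have hk : (#(qSatListsWithOnes q m (k + 1)) : ℚ) + q * m.choose k = m.choose (k + 1) := by
      exact_mod_cast card_qSatListsWithOnes_add_mul_choose (h.trans m.le_succ)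
    have hkm : k < m := by nlinarith
    have hchoose : (m.choose (k + 1) : ℚ) * (k + 1) = m.choose k * (m - k) := by
      rw [← Nat.cast_sub hkm.le]
      exact_mod_cast Nat.choose_succ_right_eq m k
    have hpos : (0 : ℚ) < m - k := by simpa using (Nat.cast_lt (α := ℚ)).2 hkm
    push_cast
    rw [show (m : ℚ) - (k + 1) + 1 = m - k by ring, div_mul_eq_mul_div, eq_div_iff hpos.ne']
    linear_combination (m - k : ℚ) * hk + q * hchoose

theorem card_qSatLists_eq_sum (q m : ℕ) :
    #(qSatLists q m) = ∑ k ∈ range (m / (q + 1) + 1), #(qSatListsWithOnes q m k) := by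
  refine card_eq_sum_card_fiberwise fun l hl => ?_
  obtain ⟨rfl, hq⟩ : l.length = m ∧ QSatisfying q l := by simpa [qSatLists] using hl
  simpa [Nat.lt_succ_iff, Nat.le_div_iff_mul_le, mul_comm] using hq.succ_mul_count_true_le_length

end Counting

/-- For `q, m ≥ 0`, the total number of `q`-satisfying sequences of length `m` equals
`Σ_{k=0}^{⌊m/(q+1)⌋} ((m−(q+1)k+1)/(m−k+1)) · C(m, k)`. -/
theorem count_q_satisfying_total (q m : ℕ) :
    (Nat.card {l : List Bool // l.length = m ∧ QSatisfying q l} : ℚ) =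
      ∑ k ∈ Finset.range (m / (q + 1) + 1),
        ((m : ℚ) - (q + 1) * k + 1) / ((m : ℚ) - k + 1) * Nat.choose m k := by
  have hcard : Nat.card {l : List Bool // l.length = m ∧ QSatisfying q l} = #(qSatLists q m) :=
    Nat.card_eq_card_finite_toFinset (finite_setOf_qSatisfying_length_eq q m)
  rw [hcard, card_qSatLists_eq_sum, Nat.cast_sum]
  refine sum_congr rfl fun k hk => card_qSatListsWithOnes_eq ?_
  rw [mem_range, Nat.lt_succ_iff, Nat.le_div_iff_mul_le q.succ_pos] at hk
  linarith
end

section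
/- For integers q ≥ 0 and n ≥ 0, the number of q-ballot sequences with n 1's, i.e. q-satisfying sequences with exactly n 1's and qn 0's, equals the generalized Catalan number C_n^q = (1/(qn+1)) · binom((q+1)n, n). -/
theorem QSatisfying.mul_count_true_le_s5 {q : ℕ} {l : List Bool} (h : QSatisfying q l) :
    q * l.count true ≤ l.count false := by
  simpa using h l.length le_rfl

theorem qSatisfying_append_singleton_iff {q : ℕ} {l : List Bool} {x : Bool} :
    QSatisfying q (l ++ [x]) ↔
      QSatisfying q l ∧ q * (l ++ [x]).count true ≤ (l ++ [x]).count false := by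
  refine ⟨fun h => ⟨fun m hm => ?_, h.mul_count_true_le_s5⟩, fun ⟨hl, hx⟩ m hm => ?_⟩
  · simpa [List.take_append_of_le_length hm] using h m (by simp; omega)
  · rcases le_or_gt m l.length with hm' | hm'
    · simpa [List.take_append_of_le_length hm'] using hl m hm'
    · rwa [List.take_of_length_le (by simp at hm ⊢; omega)]

theorem qSatisfying_zero (l : List Bool) : QSatisfying 0 l := by
  simp [QSatisfying]

theorem List.eq_replicate_not_of_count_eq_zero {l : List Bool} {b : Bool} (h : l.count b = 0) :
    l = List.replicate (l.count !b) !b := by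
  have hmem : ∀ x ∈ l, x = !b := fun x hx => by
    cases x <;> cases b <;> simp_all [List.count_eq_zero]
  rw [List.eq_replicate_iff]
  exact ⟨by have := l.count_not_add_count b; omega, hmem⟩

def ballotSet (q a b : ℕ) : Set (List Bool) :=
  {l | l.count true = b ∧ l.count false = a ∧ QSatisfying q l}

theorem ballotSet_finite (q a b : ℕ) : (ballotSet q a b).Finite :=
  (List.finite_length_eq Bool (b + a)).subset fun l ⟨hb, ha, _⟩ => by
    rw [Set.mem_ofPred_eq, ← hb, ← ha, List.count_true_add_count_false]

theorem ballotSet_eq_empty {q a b : ℕ} (h : a < q * b) : ballotSet q a b = ∅ :=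
  Set.eq_empty_of_forall_notMem fun l ⟨hb, ha, hl⟩ => by
    have := hl.mul_count_true_le_s5
    rw [hb, ha] at this
    omega

theorem ballotSet_no_ones (q a : ℕ) : ballotSet q a 0 = {List.replicate a false} := by
  ext l
  refine ⟨fun ⟨hb, ha, _⟩ => ?_, ?_⟩
  · simpa [ha] using List.eq_replicate_not_of_count_eq_zero hb
  · rintro rfl
    refine ⟨by simp [List.count_replicate], by simp, fun m _ => ?_⟩
    simp [List.take_replicate, List.count_replicate]

theorem ballotSet_zero_no_zeros (b : ℕ) : ballotSet 0 0 b = {List.replicate b true} := by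
  ext l
  refine ⟨fun ⟨hb, ha, _⟩ => ?_, ?_⟩
  · simpa [hb] using List.eq_replicate_not_of_count_eq_zero ha
  · rintro rfl
    exact ⟨by simp, by simp [List.count_replicate], qSatisfying_zero _⟩

theorem ballotSet_succ_succ {q a b : ℕ} (h : q * (b + 1) ≤ a + 1) :
    ballotSet q (a + 1) (b + 1) =
      (· ++ [false]) '' ballotSet q a (b + 1) ∪ (· ++ [true]) '' ballotSet q (a + 1) b := by
  ext l
  rcases l.eq_nil_or_concat' with rfl | ⟨l, x, rfl⟩
  · simp [ballotSet]
  · cases x <;> simp [ballotSet, qSatisfying_append_singleton_iff] <;>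
      rintro hb ha - <;> rw [hb, ha] <;> omega

theorem ncard_ballotSet_succ_succ {q a b : ℕ} (h : q * (b + 1) ≤ a + 1) :
    (ballotSet q (a + 1) (b + 1)).ncard =
      (ballotSet q a (b + 1)).ncard + (ballotSet q (a + 1) b).ncard := by
  have hdisj : Disjoint ((· ++ [false]) '' ballotSet q a (b + 1))
      ((· ++ [true]) '' ballotSet q (a + 1) b) := by
    rw [Set.disjoint_left]
    rintro _ ⟨l, -, rfl⟩ ⟨l', -, hl'⟩
    simpa using congrArg List.getLast? hl'
  rw [ballotSet_succ_succ h, Set.ncard_union_eq hdisj ((ballotSet_finite ..).image _)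
      ((ballotSet_finite ..).image _),
    Set.ncard_image_of_injective _ (List.append_left_injective _),
    Set.ncard_image_of_injective _ (List.append_left_injective _)]

theorem Nat.add_one_mul_choose_add (a b : ℕ) :
    (a + 1) * (a + b).choose (a + 1) = b * (a + b).choose b := by
  rw [mul_comm, Nat.choose_succ_right_eq, Nat.choose_symm_add, Nat.add_sub_cancel_left, mul_comm]

-- `C(a+b, a+1) = C(a+b, b-1)`: this is `N = C(a+b, b) - q C(a+b, b-1)` without truncated subtraction.
theorem ncard_ballotSet_add_mul_choose (q : ℕ) : ∀ a b : ℕ, q * b ≤ a →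
    (ballotSet q a b).ncard + q * (a + b).choose (a + 1) = (a + b).choose b
  | a, 0, _ => by simp [ballotSet_no_ones]
  | 0, b + 1, h => by
    obtain rfl : q = 0 := by simpa using h
    simp [ballotSet_zero_no_zeros]
  | a + 1, b + 1, h => by
    have hfalse : (ballotSet q a (b + 1)).ncard + q * (a + b + 1).choose (a + 1) =
        (a + b + 1).choose (b + 1) := by
      rcases le_or_gt (q * (b + 1)) a with hle | hlt
      · exact ncard_ballotSet_add_mul_choose q a (b + 1) hle
      · have hq : q * (b + 1) = a + 1 := by omega
        rw [ballotSet_eq_empty hlt, Set.ncard_empty, zero_add]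
        refine Nat.eq_of_mul_eq_mul_left b.succ_pos ?_
        calc (b + 1) * (q * (a + b + 1).choose (a + 1))
            _ = (a + 1) * (a + b + 1).choose (a + 1) := by rw [← hq]; ring
            _ = (b + 1) * (a + b + 1).choose (b + 1) := Nat.add_one_mul_choose_add a (b + 1)
    have htrue := ncard_ballotSet_add_mul_choose q (a + 1) b
      ((Nat.mul_le_mul_left q b.le_succ).trans (by omega))
    rw [Nat.add_right_comm] at htrue
    rw [ncard_ballotSet_succ_succ (by omega), show a + 1 + (b + 1) = a + b + 1 + 1 by ring,
      Nat.choose_succ_succ' _ (a + 1), Nat.choose_succ_succ' _ b]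
    linarith
termination_by a b => a + b

theorem ncard_ballotSet {q a b : ℕ} (h : q * b ≤ a) :
    ((ballotSet q a b).ncard : ℚ) = (a + 1 - q * b) / (a + 1) * (a + b).choose b := by
  have hsum : ((ballotSet q a b).ncard : ℚ) + q * (a + b).choose (a + 1) = (a + b).choose b := by
    exact_mod_cast ncard_ballotSet_add_mul_choose q a b h
  have hchoose : ((a : ℚ) + 1) * (a + b).choose (a + 1) = b * (a + b).choose b := by
    exact_mod_cast Nat.add_one_mul_choose_add a b
  field_simp
  linear_combination (a + 1 : ℚ) * hsum - q * hchoose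

/-- For `q, n ≥ 0`, the number of `q`-ballot sequences with `n` 1's (`q`-satisfying
sequences with exactly `n` 1's and `qn` 0's) equals the generalized Catalan number
`C_n^q = (1/(qn+1)) · C((q+1)n, n)`. -/
theorem count_q_ballot (q n : ℕ) :
    (Nat.card {l : List Bool //
        l.count true = n ∧ l.count false = q * n ∧ QSatisfying q l} : ℚ) =
      1 / (q * n + 1) * Nat.choose ((q + 1) * n) n := by
  change (Nat.card (ballotSet q (q * n) n) : ℚ) = _
  rw [Nat.card_coe_set_eq, ncard_ballotSet le_rfl, add_mul, one_mul]
  push_cast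
  ring
end

section
/- (Extended Strong Cycle Lemma) Let q ≥ 0, k ≥ 0, p ≥ 1, and let a be a (k, qk+p)-arrangement. For every integer i with p ≤ i ≤ qk+p, there are at least qk+2p−i zero positions r such that the 0-linearization ending at r has at least i q-good 0-intervals, i.e. |{ j : a_j = 0 and (r,j] is q-good }| ≥ i. -/
/-!
Give a 0 the weight `1` and a 1 the weight `-q`: an interval is `q`-good iff its weight is
positive, and the whole cycle has weight `p`. Cutting the linearization at a zero into blocks
`1 ⋯ 1 0` and recording their weights gives a list of `l = qk + p` integers `≤ 1` with sum `p`;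
the linearizations at the `l` zeros give exactly the `l` rotations of this list, and the
0-intervals that are not `q`-good become the nonpositive partial sums. So it suffices that for a
list of integers `≤ 1` with sum `p ≥ 1` and length at least `j + p`, at least `j + p` of its
rotations have at most `j` nonpositive partial sums. This goes by induction on the length: some
rotation has the form `M ++ [1, c]` with `c ≤ 0` and all suffix sums of `M` nonnegative, and
merging `1, c` into `1 + c` leaves the counts of the rotations starting inside `M` unchanged.
-/

/-- An interval (list of 0's and 1's) is `q`-good if its number of 0's (`false`)
strictly exceeds `q` times its number of 1's (`true`). -/
def QGood (q : ℕ) (I : List Bool) : Prop :=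
  q * I.count true < I.count false

/-- The interval `(r, s]` of a cyclic arrangement `a : ZMod n → Bool`: the list
`a (r+1), …, a s` read cyclically, where `(r, r]` denotes the entire cycle. -/
def interval {n : ℕ} (a : ZMod n → Bool) (r s : ZMod n) : List Bool :=
  (List.range (if s = r then n else (s - r).val)).map
    (fun j => a (r + ((j + 1 : ℕ) : ZMod n)))

/-- For a zero position `r`, `Dset q a r` is the set of zero positions `j` such
that the 0-interval `(r, j]` is `q`-good. -/
def Dset {n : ℕ} (q : ℕ) (a : ZMod n → Bool) (r : ZMod n) : Set (ZMod n) :=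
  {j | a j = false ∧ QGood q (interval a r j)}

namespace CycleLemma

open Finset

theorem card_filter_range_succ (n : ℕ) (P : ℕ → Prop) [DecidablePred P] :
    #{m ∈ range (n + 1) | P m} = #{m ∈ range n | P (m + 1)} + if P 0 then 1 else 0 := by
  simp only [card_filter, sum_range_succ']

theorem count_eq_card_filter_range {α : Type*} [DecidableEq α] (L : List α) (b : α) :
    L.count b = #{m ∈ range L.length | L[m]? = some b} := by
  induction L with
  | nil => simp
  | cons x L ih => simp [card_filter_range_succ, List.count_cons, ih]

theorem count_take_lt_count_take {C : List Bool} {d₁ d₂ : ℕ} (h : d₁ < d₂)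
    (hd₂ : C[d₂ - 1]? = some false) :
    (C.take d₁).count false < (C.take d₂).count false := by
  have hsplit : C.take d₂ = C.take (d₂ - 1) ++ [false] := by
    simpa [Nat.sub_add_cancel (show 1 ≤ d₂ by omega), hd₂] using
      List.take_add_one (l := C) (i := d₂ - 1)
  have := (List.take_prefix_take_left (l := C) (show d₁ ≤ d₂ - 1 by omega)).count_le false
  rw [hsplit, List.count_append, List.count_singleton_self]
  omega

theorem card_filter_range_add {n : ℕ} [NeZero n] (r : ZMod n) (P : ZMod n → Prop)
    [DecidablePred P] : #{m ∈ range n | P (r + ((m : ℕ) : ZMod n))} = #{x | P x} := by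
  refine card_nbij' (fun m => r + m) (fun x => (x - r).val) (fun m hm => by simp_all)
    (fun x hx => by simp_all [ZMod.val_lt]) (fun m hm => ?_) (fun x _ => by simp)
  simp_all [Nat.mod_eq_of_lt]

theorem card_filter_rotate_rotate {α : Type*} (L : List α) (τ : ℕ) (P : List α → Prop)
    [DecidablePred P] :
    #{t ∈ range L.length | P ((L.rotate τ).rotate t)} =
      #{t ∈ range L.length | P (L.rotate t)} := by
  rcases Nat.eq_zero_or_pos L.length with h | h
  · simp [h]
  have : NeZero L.length := ⟨h.ne'⟩
  have hmod : ∀ t : ℕ, L.rotate t = L.rotate (t : ZMod L.length).val := fun t => by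
    rw [ZMod.val_natCast, List.rotate_mod]
  have hshift := (card_filter_range_add (τ : ZMod L.length) fun x => P (L.rotate x.val)).trans
    (card_filter_range_add 0 _).symm
  simpa only [zero_add, ← Nat.cast_add, ← hmod, List.rotate_rotate] using hshift

def nonposCount (s : ℤ) : List ℤ → ℕ
  | [] => 0
  | x :: L => (if s + x ≤ 0 then 1 else 0) + nonposCount (s + x) L

theorem nonposCount_add_sum_le {L : List ℤ} (hL : ∀ x ∈ L, x ≤ 1) (s : ℤ) :
    nonposCount s L + s + L.sum ≤ L.length + max s 0 := by
  induction L generalizing s with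
  | nil => simp [nonposCount]
  | cons x L ih =>
    have hx := hL x (by simp)
    have := ih (fun y hy => hL y (by simp [hy])) (s + x)
    simp only [nonposCount, List.sum_cons, List.length_cons]
    split_ifs <;> push_cast <;> grind

theorem nonposCount_append_one_cons {s : ℤ} {Y : List ℤ} (c : ℤ) (Z : List ℤ)
    (hY : 0 ≤ s + Y.sum) :
    nonposCount s (Y ++ 1 :: c :: Z) = nonposCount s (Y ++ (1 + c) :: Z) := by
  induction Y generalizing s with
  | nil =>
    simp only [List.sum_nil, add_zero] at hY
    simp [nonposCount, add_assoc, show ¬ s + 1 ≤ 0 by omega]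
  | cons y Y ih =>
    simp only [List.cons_append, nonposCount]
    rw [ih (by simpa [add_assoc] using hY)]

theorem exists_first_max_sum_take (L : List ℤ) :
    ∃ m ≤ L.length, (∀ i, (L.take i).sum ≤ (L.take m).sum) ∧
      ∀ i < m, (L.take i).sum < (L.take m).sum := by
  obtain ⟨m₀, hm₀, hmax⟩ :=
    (range (L.length + 1)).exists_max_image (fun i => (L.take i).sum) ⟨0, by simp⟩
  have hle : ∀ i, (L.take i).sum ≤ (L.take m₀).sum := fun i => by
    rcases le_or_gt i L.length with hi | hi
    · exact hmax i (mem_range.mpr (by omega))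
    · simpa [List.take_of_length_le hi.le] using hmax L.length (by simp)
  have hex : ∃ m, (L.take m).sum = (L.take m₀).sum := ⟨m₀, rfl⟩
  refine ⟨Nat.find hex, (Nat.find_min' hex rfl).trans (by simpa using hm₀), fun i => ?_,
    fun i hi => ?_⟩ <;> rw [Nat.find_spec hex]
  exacts [hle i, lt_of_le_of_ne (hle i) (Nat.find_min hex hi)]

theorem exists_eq_append_one_cons {L : List ℤ} (hL : ∀ x ∈ L, x ≤ 1) (hsum : 0 < L.sum) :
    ∃ A D, L = A ++ 1 :: D ∧ (∀ i, 0 ≤ (A.drop i).sum) ∧ ∀ i, (D.take i).sum ≤ 0 := by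
  -- `A ++ [1]` is the shortest prefix of maximal sum
  obtain ⟨m, hmL, hle, hlt⟩ := exists_first_max_sum_take L
  obtain ⟨k, rfl⟩ : ∃ k, m = k + 1 := by
    refine Nat.exists_eq_succ_of_ne_zero fun h0 => ?_
    have := hle L.length
    simp only [h0, List.take_zero, List.sum_nil, List.take_length] at this
    omega
  have hk : k < L.length := hmL
  have hstep : (L.take (k + 1)).sum = (L.take k).sum + L[k] := by
    rw [List.take_add_one, List.getElem?_eq_getElem hk, Option.toList_some, List.sum_append,
      List.sum_singleton]
  have hLk : L[k] = 1 := by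
    have := hL _ (List.getElem_mem hk)
    have := hlt k k.lt_succ_self
    omega
  refine ⟨L.take k, L.drop (k + 1), ?_, fun i => ?_, fun i => ?_⟩
  · rw [← hLk, ← List.drop_eq_getElem_cons, List.take_append_drop]
  · have hsplit := congrArg List.sum (List.take_append_drop i (L.take k))
    rw [List.sum_append, List.take_take] at hsplit
    have := hlt (min i k) (by omega)
    omega
  · have := hle (k + 1 + i)
    rw [List.take_add, List.sum_append] at this
    omega

theorem exists_rotate_eq_append_one_nonpos {L : List ℤ} (hL : ∀ x ∈ L, x ≤ 1)
    (hsum : 0 < L.sum) {c₀ : ℤ} (hc₀L : c₀ ∈ L) (hc₀ : c₀ ≤ 0) :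
    ∃ τ M c, L.rotate τ = M ++ [1, c] ∧ c ≤ 0 ∧ ∀ i, 0 ≤ (M.drop i).sum := by
  -- once `c₀` is moved to the end, the part `D` after the shortest maximal prefix is nonempty
  obtain ⟨S, T, rfl⟩ := List.append_of_mem hc₀L
  set L₀ := T ++ (S ++ [c₀]) with hL₀
  have hrot : (S ++ c₀ :: T).rotate (S ++ [c₀]).length = L₀ := by
    simpa using List.rotate_append_length_eq (S ++ [c₀]) T
  have hperm : L₀.Perm (S ++ c₀ :: T) := hrot ▸ List.rotate_perm _ _
  obtain ⟨A, D, hAD, hA, hD⟩ :=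
    exists_eq_append_one_cons (fun x hx => hL x (hperm.subset hx)) (hperm.sum_eq ▸ hsum)
  obtain ⟨c, B, rfl⟩ : ∃ c B, D = c :: B := by
    refine List.exists_cons_of_ne_nil fun hD => ?_
    have := congrArg List.getLast? hAD
    simp only [hL₀, hD, List.getLast?_append, List.getLast?_singleton, Option.some_or,
      Option.some.injEq] at this
    omega
  refine ⟨(S ++ [c₀]).length + (A ++ [1, c]).length, B ++ A, c, ?_, by simpa using hD 1, ?_⟩
  · rw [← List.rotate_rotate, hrot, hAD]
    simpa using List.rotate_append_length_eq (A ++ [1, c]) B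
  · intro i
    have hsumL : A.sum + 1 + (c :: B).sum = L₀.sum := by
      simp only [hAD, List.sum_append, List.sum_cons]
      ring
    have hB : (c :: B).sum ≤ (B.drop i).sum := by
      have := hD (i + 1)
      rw [← List.take_append_drop (i + 1) (c :: B), List.sum_append]
      simp only [List.drop_succ_cons]
      omega
    rw [List.drop_append, List.sum_append]
    rcases le_or_gt i B.length with hi | hi
    · rw [Nat.sub_eq_zero_of_le hi, List.drop_zero]
      have : 0 < L₀.sum := hperm.sum_eq ▸ hsum
      omega
    · rw [List.drop_eq_nil_of_le hi.le]
      simpa using hA (i - B.length)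

theorem card_filter_nonposCount_rotate_merge_le {M : List ℤ} (hM : ∀ i, 0 ≤ (M.drop i).sum)
    (c : ℤ) (j : ℕ) :
    #{t ∈ range (M.length + 1) | nonposCount 0 ((M ++ [1 + c]).rotate t) ≤ j} ≤
      #{t ∈ range (M.length + 2) | nonposCount 0 ((M ++ [1, c]).rotate t) ≤ j} := by
  calc #{t ∈ range (M.length + 1) | nonposCount 0 ((M ++ [1 + c]).rotate t) ≤ j}
      = #{t ∈ range (M.length + 1) | nonposCount 0 ((M ++ [1, c]).rotate t) ≤ j} := by
        refine congrArg card (filter_congr fun t ht => ?_)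
        have ht : t ≤ M.length := Nat.lt_succ_iff.mp (mem_range.mp ht)
        rw [List.rotate_eq_drop_append_take (by rw [List.length_append]; omega),
          List.rotate_eq_drop_append_take (by rw [List.length_append]; omega)]
        simp only [List.drop_append_of_le_length ht, List.take_append_of_le_length ht,
          List.append_assoc, List.cons_append, List.nil_append]
        rw [nonposCount_append_one_cons _ _ (by simpa using hM t)]
    _ ≤ _ := card_le_card (filter_subset_filter _ (range_subset_range.mpr (by omega)))

theorem le_card_filter_nonposCount_rotate_le {L : List ℤ} (hL : ∀ x ∈ L, x ≤ 1) {p : ℕ}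
    (hp : 0 < p) (hsum : L.sum = p) {j : ℕ} (hj : j + p ≤ L.length) :
    j + p ≤ #{t ∈ range L.length | nonposCount 0 (L.rotate t) ≤ j} := by
  obtain ⟨n, hn⟩ : ∃ n, L.length = n := ⟨_, rfl⟩
  induction n generalizing L with
  | zero => omega
  | succ n ih =>
  rcases eq_or_lt_of_le hj with hj | hj
  · rw [filter_true_of_mem fun t _ => ?_, card_range]
    · exact hj.le
    have hperm := List.rotate_perm L t
    have := nonposCount_add_sum_le (fun x hx => hL x (hperm.subset hx)) 0
    rw [hperm.sum_eq, hsum, List.length_rotate] at this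
    omega
  obtain ⟨c₀, hc₀L, hc₀⟩ : ∃ c₀ ∈ L, c₀ ≤ 0 := by
    by_contra! h
    have := L.card_nsmul_le_sum 1 fun x hx => h x hx
    simp only [nsmul_eq_mul, mul_one, hsum] at this
    omega
  obtain ⟨τ, M, c, hR, hc, hM⟩ := exists_rotate_eq_append_one_nonpos hL (by omega) hc₀L hc₀
  have hperm : (M ++ [1, c]).Perm L := hR ▸ List.rotate_perm L τ
  have hMlen : M.length + 1 = n := by
    have := hperm.length_eq
    simp only [List.length_append, List.length_cons, List.length_nil] at this
    omega
  have hL' : ∀ x ∈ M ++ [1 + c], x ≤ 1 := by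
    simp only [List.mem_append, List.mem_singleton]
    rintro x (hx | rfl)
    exacts [hL x (hperm.subset (by simp [hx])), by omega]
  have hsum' : (M ++ [1 + c]).sum = p := by
    rw [← hsum, ← hperm.sum_eq]
    simp
  have hlen : (M ++ [1 + c]).length = M.length + 1 := List.length_append
  have hIH := hlen ▸ ih hL' hsum' (by omega) (by omega)
  calc j + p ≤ #{t ∈ range (M.length + 2) | nonposCount 0 ((L.rotate τ).rotate t) ≤ j} :=
        hR ▸ hIH.trans (card_filter_nonposCount_rotate_merge_le hM c j)
    _ = #{t ∈ range L.length | nonposCount 0 (L.rotate t) ≤ j} := by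
        rw [show M.length + 2 = L.length by omega]
        exact card_filter_rotate_rotate L τ (fun R => nonposCount 0 R ≤ j)

def weight (q : ℕ) (I : List Bool) : ℤ :=
  I.count false - q * I.count true

theorem qGood_iff_pos_weight {q : ℕ} {I : List Bool} : QGood q I ↔ 0 < weight q I := by
  simp only [QGood, weight]
  omega

@[simp]
theorem weight_nil (q : ℕ) : weight q [] = 0 := by
  simp [weight]

theorem weight_cons (q : ℕ) (b : Bool) (I : List Bool) :
    weight q (b :: I) = (if b then -(q : ℤ) else 1) + weight q I := by
  cases b <;> simp only [weight, List.count_cons_self, List.count_cons_of_ne, ne_eq,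
    Bool.false_eq_true, Bool.true_eq_false, not_false_eq_true, Nat.cast_add, Nat.cast_one,
    ↓reduceIte] <;> ring

/-- Each block `1 ⋯ 1 0` of `B` is replaced by its weight `1 - q · #1's`, the 1's read so far
being accumulated in `acc`; trailing 1's are dropped. -/
def blockWeights (q : ℕ) (acc : ℤ) : List Bool → List ℤ
  | [] => []
  | true :: B => blockWeights q (acc - q) B
  | false :: B => (acc + 1) :: blockWeights q 0 B

theorem length_blockWeights (q : ℕ) (acc : ℤ) (B : List Bool) :
    (blockWeights q acc B).length = B.count false := by
  induction B generalizing acc with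
  | nil => rfl
  | cons b B ih => cases b <;> simp [blockWeights, ih]

theorem blockWeights_le_one (q : ℕ) {acc : ℤ} (hacc : acc ≤ 0) (B : List Bool) :
    ∀ x ∈ blockWeights q acc B, x ≤ 1 := by
  induction B generalizing acc with
  | nil => simp [blockWeights]
  | cons b B ih =>
    cases b
    · simp only [blockWeights, List.mem_cons]
      rintro x (rfl | hx)
      exacts [by omega, ih le_rfl x hx]
    · exact ih (by omega)

theorem sum_blockWeights (q : ℕ) (acc : ℤ) (B : List Bool) :
    (blockWeights q acc (B ++ [false])).sum = acc + weight q (B ++ [false]) := by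
  induction B generalizing acc with
  | nil => simp [blockWeights, weight]
  | cons b B ih =>
    cases b <;> simp only [List.cons_append, blockWeights, List.sum_cons, ih, weight_cons,
      Bool.false_eq_true, ↓reduceIte, zero_add] <;> ring

theorem blockWeights_append (q : ℕ) (acc : ℤ) (U V : List Bool) :
    blockWeights q acc (U ++ false :: V) =
      blockWeights q acc (U ++ [false]) ++ blockWeights q 0 V := by
  induction U generalizing acc with
  | nil => simp [blockWeights]
  | cons b U ih => cases b <;> simp [blockWeights, ih]

theorem blockWeights_append_rotate (q : ℕ) {U V : List Bool} (hU : U.getLast? = some false)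
    (hV : V.getLast? = some false) :
    blockWeights q 0 (V ++ U) = (blockWeights q 0 (U ++ V)).rotate (U.count false) := by
  obtain ⟨X, rfl⟩ := List.getLast?_eq_some_iff.mp hU
  obtain ⟨Y, rfl⟩ := List.getLast?_eq_some_iff.mp hV
  simp only [List.append_assoc, List.singleton_append]
  rw [blockWeights_append q 0 Y, blockWeights_append q 0 X (Y ++ [false]),
    ← length_blockWeights q 0, List.rotate_append_length_eq]

theorem nonposCount_blockWeights (q : ℕ) (B : List Bool) (s acc : ℤ) :
    nonposCount s (blockWeights q acc B) =
      #{m ∈ range B.length |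
        B[m]? = some false ∧ s + acc + weight q (B.take (m + 1)) ≤ 0} := by
  induction B generalizing s acc with
  | nil => simp [blockWeights, nonposCount]
  | cons b B ih =>
    rw [List.length_cons, card_filter_range_succ]
    cases b
    · rw [add_comm]
      simp [blockWeights, nonposCount, ih, weight_cons, add_assoc]
    · simp [blockWeights, ih, weight_cons, sub_eq_add_neg, add_assoc]

section Arrangement

variable {n : ℕ} (a : ZMod n → Bool)

def linearization (r : ZMod n) : List Bool :=
  (List.range n).map fun m => a (r + ((m + 1 : ℕ) : ZMod n))

@[simp]
theorem length_linearization (r : ZMod n) : (linearization a r).length = n := by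
  simp [linearization]

theorem getElem?_linearization (r : ZMod n) {m : ℕ} (hm : m < n) :
    (linearization a r)[m]? = some (a (r + ((m + 1 : ℕ) : ZMod n))) := by
  simp [linearization, hm]

theorem getElem?_linearization_sub_one (r : ZMod n) {d : ℕ} (hd₀ : 0 < d) (hd : d ≤ n) :
    (linearization a r)[d - 1]? = some (a (r + d)) := by
  rw [getElem?_linearization a r (by omega), Nat.sub_add_cancel hd₀]

theorem interval_add_eq_take (r : ZMod n) {m : ℕ} (hm : m < n) :
    interval a r (r + ((m + 1 : ℕ) : ZMod n)) = (linearization a r).take (m + 1) := by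
  have hlen : (if r + ((m + 1 : ℕ) : ZMod n) = r then n
      else (r + ((m + 1 : ℕ) : ZMod n) - r).val) = m + 1 := by
    rcases Nat.lt_or_eq_of_le (show m + 1 ≤ n by omega) with hlt | heq
    · have hval : ((m + 1 : ℕ) : ZMod n).val = m + 1 := ZMod.val_cast_of_lt hlt
      rw [if_neg fun h => by simp [add_eq_left.mp h] at hval, add_sub_cancel_left, hval]
    · rw [if_pos (by rw [heq, ZMod.natCast_self, add_zero])]
      exact heq.symm
  rw [interval, hlen, linearization, ← List.map_take, List.take_range, min_eq_left (by omega)]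

theorem linearization_add (r : ZMod n) (d : ℕ) :
    linearization a (r + d) = (linearization a r).rotate d := by
  refine List.ext_getElem (by simp) fun m _ _ => ?_
  simp only [linearization, List.getElem_map, List.getElem_range, List.getElem_rotate,
    List.length_map, List.length_range]
  congr 1
  push_cast [ZMod.natCast_mod]
  ring

variable [NeZero n]

theorem getLast?_linearization (r : ZMod n) : (linearization a r).getLast? = some (a r) := by
  rw [List.getLast?_eq_getElem?, length_linearization,
    getElem?_linearization_sub_one a r (NeZero.pos n) le_rfl, ZMod.natCast_self, add_zero]

theorem count_linearization (r : ZMod n) (b : Bool) :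
    (linearization a r).count b = #{j | a j = b} := by
  rw [count_eq_card_filter_range, length_linearization, ← card_filter_range_add (r + 1)]
  refine congrArg card (filter_congr fun m hm => ?_)
  rw [getElem?_linearization a r (mem_range.mp hm)]
  simp [add_comm, add_left_comm]

theorem ncard_Dset_add_nonposCount (q : ℕ) (r : ZMod n) :
    (Dset q a r).ncard + nonposCount 0 (blockWeights q 0 (linearization a r)) =
      #{j | a j = false} := by
  have hD : Dset q a r = ↑({j | a j = false ∧ 0 < weight q (interval a r j)} : Finset _) := by
    ext j
    simp [Dset, qGood_iff_pos_weight]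
  have hN : nonposCount 0 (blockWeights q 0 (linearization a r)) =
      #{j | a j = false ∧ weight q (interval a r j) ≤ 0} := by
    rw [nonposCount_blockWeights, length_linearization, ← card_filter_range_add (r + 1)]
    refine congrArg card (filter_congr fun m hm => ?_)
    have hm := mem_range.mp hm
    rw [getElem?_linearization a r hm, ← interval_add_eq_take a r hm]
    simp [add_comm, add_left_comm]
  rw [hD, Set.ncard_coe_finset, hN,
    ← card_filter_add_card_filter_not (s := {j | a j = false})
      fun j => 0 < weight q (interval a r j)]
  simp [filter_filter]

theorem getElem?_linearization_val_sub_sub_one {ρ r : ZMod n} (hrρ : r ≠ ρ) :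
    (linearization a ρ)[(r - ρ).val - 1]? = some (a r) := by
  rw [getElem?_linearization_sub_one a ρ (ZMod.val_pos.mpr (sub_ne_zero.mpr hrρ))
    (ZMod.val_lt _).le, ZMod.natCast_zmod_val, add_sub_cancel]

def zeroIndex (ρ r : ZMod n) : ℕ :=
  ((linearization a ρ).take (r - ρ).val).count false

theorem zeroIndex_lt {ρ : ZMod n} (hρ : a ρ = false) (r : ZMod n) :
    zeroIndex a ρ r < #{j | a j = false} := by
  have hlast : (linearization a ρ)[(linearization a ρ).length - 1]? = some false := by
    rw [← List.getLast?_eq_getElem?, getLast?_linearization, hρ]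
  have := count_take_lt_count_take (by simpa using ZMod.val_lt (r - ρ)) hlast
  rwa [List.take_length, count_linearization] at this

theorem zeroIndex_injOn (ρ : ZMod n) : Set.InjOn (zeroIndex a ρ) {j | a j = false} := by
  intro r₁ h₁ r₂ h₂ he
  by_contra hne
  have hval : (r₁ - ρ).val ≠ (r₂ - ρ).val := fun h =>
    hne (by simpa using ZMod.val_injective n h)
  rcases Nat.lt_or_gt_of_ne hval with hlt | hlt
  · refine (count_take_lt_count_take hlt ?_).ne he
    rw [getElem?_linearization_val_sub_sub_one a fun h => by simp [h] at hlt]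
    exact congrArg some h₂
  · refine (count_take_lt_count_take hlt ?_).ne he.symm
    rw [getElem?_linearization_val_sub_sub_one a fun h => by simp [h] at hlt]
    exact congrArg some h₁

theorem blockWeights_linearization (q : ℕ) {ρ r : ZMod n} (hρ : a ρ = false)
    (hr : a r = false) :
    blockWeights q 0 (linearization a r) =
      (blockWeights q 0 (linearization a ρ)).rotate (zeroIndex a ρ r) := by
  by_cases hrρ : r = ρ
  · simp [hrρ, zeroIndex]
  have hd₀ : 0 < (r - ρ).val := ZMod.val_pos.mpr (sub_ne_zero.mpr hrρ)
  have hlin : linearization a r = (linearization a ρ).rotate (r - ρ).val := by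
    rw [← linearization_add, ZMod.natCast_zmod_val, add_sub_cancel]
  have htake : ((linearization a ρ).take (r - ρ).val).getLast? = some false := by
    rw [List.getLast?_take, if_neg hd₀.ne', getElem?_linearization_val_sub_sub_one a hrρ, hr]
    rfl
  have hdrop : ((linearization a ρ).drop (r - ρ).val).getLast? = some false := by
    rw [List.getLast?_drop, if_neg (by simpa using ZMod.val_lt (r - ρ)), getLast?_linearization,
      hρ]
  rw [hlin, List.rotate_eq_drop_append_take (by simpa using (ZMod.val_lt (r - ρ)).le), zeroIndex]
  simpa only [List.take_append_drop] using blockWeights_append_rotate q htake hdrop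

/-- `zeroIndex a ρ` is a bijection from the zeros onto the rotations of the block weights at `ρ`
(`blockWeights_linearization`). -/
theorem card_filter_rotate_blockWeights_le (q : ℕ) {ρ : ZMod n} (hρ : a ρ = false) (P : List ℤ → Prop)
    [DecidablePred P] :
    #{t ∈ range #{j | a j = false} | P ((blockWeights q 0 (linearization a ρ)).rotate t)} ≤
      #{r | a r = false ∧ P (blockWeights q 0 (linearization a r))} := by
  set Z : Finset (ZMod n) := {j | a j = false}
  have hinj : Set.InjOn (zeroIndex a ρ) Z := by simpa [Z] using zeroIndex_injOn a ρ
  have himage : Z.image (zeroIndex a ρ) = range #Z := by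
    refine eq_of_subset_of_card_le (fun t ht => ?_) (by rw [card_range, card_image_of_injOn hinj])
    obtain ⟨r, -, rfl⟩ := mem_image.mp ht
    exact mem_range.mpr (zeroIndex_lt a hρ r)
  calc #{t ∈ range #Z | P ((blockWeights q 0 (linearization a ρ)).rotate t)}
      = #(image (zeroIndex a ρ)
          {r ∈ Z | P ((blockWeights q 0 (linearization a ρ)).rotate (zeroIndex a ρ r))}) := by
        rw [← himage, filter_image]
    _ ≤ #{r ∈ Z | P ((blockWeights q 0 (linearization a ρ)).rotate (zeroIndex a ρ r))} :=
        card_image_le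
    _ = #{r | a r = false ∧ P (blockWeights q 0 (linearization a r))} := by
        rw [filter_filter]
        refine congrArg card (filter_congr fun r _ => ?_)
        exact and_congr_right fun hr => by rw [blockWeights_linearization a q hρ hr]

theorem le_card_filter_le_ncard_Dset (q : ℕ) {p : ℕ} (hp : 0 < p)
    (hzeros : #{j | a j = false} = q * #{j | a j = true} + p) {i : ℕ} (hpi : p ≤ i)
    (hil : i ≤ #{j | a j = false}) :
    #{j | a j = false} + p - i ≤ #{r | a r = false ∧ i ≤ (Dset q a r).ncard} := by
  obtain ⟨ρ, hρ⟩ := card_pos.mp (show 0 < #{j | a j = false} by omega)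
  simp only [mem_filter, mem_univ, true_and] at hρ
  have hsum : (blockWeights q 0 (linearization a ρ)).sum = p := by
    obtain ⟨B, hB⟩ := List.getLast?_eq_some_iff.mp
      (show (linearization a ρ).getLast? = some false by rw [getLast?_linearization, hρ])
    rw [hB, sum_blockWeights, ← hB, weight, count_linearization, count_linearization, hzeros]
    push_cast
    ring
  have hcount := le_card_filter_nonposCount_rotate_le (blockWeights_le_one q le_rfl _) hp hsum
    (j := #{j | a j = false} - i) (by rw [length_blockWeights, count_linearization]; omega)
  rw [length_blockWeights, count_linearization] at hcount
  calc #{j | a j = false} + p - i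
      ≤ #{r | a r = false ∧ nonposCount 0 (blockWeights q 0 (linearization a r)) ≤
          #{j | a j = false} - i} :=
        (le_of_eq (by omega)).trans
          (hcount.trans (card_filter_rotate_blockWeights_le a q hρ fun R => nonposCount 0 R ≤ _))
    _ ≤ #{r | a r = false ∧ i ≤ (Dset q a r).ncard} := by
        refine card_le_card (monotone_filter_right _ fun r _ ⟨hr, hle⟩ => ⟨hr, ?_⟩)
        have := ncard_Dset_add_nonposCount a q r
        omega

end Arrangement

end CycleLemma

/-- (Extended Strong Cycle Lemma) Let `a` be a `(k, qk+p)`-arrangement with `p ≥ 1`.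
For every `i` with `p ≤ i ≤ qk+p`, there are at least `qk+2p−i` zero positions `r`
such that the 0-linearization ending at `r` has at least `i` `q`-good 0-intervals. -/
theorem extended_strong_cycle_lemma (q k p : ℕ) (hp : 1 ≤ p)
    (a : ZMod ((q + 1) * k + p) → Bool)
    (hones : Nat.card {i : ZMod ((q + 1) * k + p) | a i = true} = k) :
    ∀ i : ℕ, p ≤ i → i ≤ q * k + p →
      q * k + 2 * p - i ≤
        Nat.card {r : ZMod ((q + 1) * k + p) | a r = false ∧ i ≤ (Dset q a r).ncard} := by
  intro i hpi hil
  have : NeZero ((q + 1) * k + p) := ⟨by omega⟩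
  simp only [Set.coe_ofPred, Nat.card_eq_fintype_card, Fintype.card_subtype] at hones ⊢
  have hsplit := Finset.card_filter_add_card_filter_not (s := Finset.univ) fun j => a j = true
  simp only [hones, Bool.not_eq_true, Finset.card_univ, ZMod.card] at hsplit
  have hzeros : (Finset.univ.filter fun j => a j = false).card = q * k + p := by
    have : (q + 1) * k = q * k + k := by ring
    omega
  have := CycleLemma.le_card_filter_le_ncard_Dset a q (by omega) (by rw [hzeros, hones]) hpi
    (by omega)
  omega
end
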